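/- Let ∂ be a ℤ-linear map from chains on S to chains on T, let A be a connected chain with ‖A‖ = n ≥ 1, and let s₀ be in the support of A. Then there exist chains B₁, …, Bₙ with Bₙ = A such that: ‖Bₖ‖ = k for each k; B₁ is supported on {s₀} with coefficient ±1; each Bₖ is a subchain of Bₖ₊₁ (and of A); and ‖∂Bₖ₊₁‖ < ‖∂Bₖ‖ + ‖∂(Bₖ₊₁ − Bₖ)‖ for each 1 ≤ k < n. -/

import Mathlib

/-- The volume of a chain `A : S →₀ ℤ`: the sum of the absolute values of its
coefficients. -/
def vol {S : Type*} (A : S →₀ ℤ) : ℕ := ∑ s ∈ A.support, (A s).natAbs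

/-- `B` is a subchain of `A` when `‖A‖ = ‖B‖ + ‖A - B‖`. -/
def Subchain {S : Type*} (B A : S →₀ ℤ) : Prop := vol A = vol B + vol (A - B)

/-- Given a boundary map `d`, `B` is a component of `A` if `B` is a subchain of `A`
and `d B` is a subchain of `d A`. -/
def Component {S T : Type*} (d : (S →₀ ℤ) →ₗ[ℤ] (T →₀ ℤ)) (B A : S →₀ ℤ) : Prop :=
  Subchain B A ∧ Subchain (d B) (d A)

/-- A chain is connected if its only components are `0` and itself. -/
def Connected {S T : Type*} (d : (S →₀ ℤ) →ₗ[ℤ] (T →₀ ℤ)) (A : S →₀ ℤ) : Prop :=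
  ∀ B : S →₀ ℤ, Component d B A → B = 0 ∨ B = A

/-!
Grow the chain greedily from `±δ_{s₀}`. If `C` is a nonzero proper subchain of `A`, every
cell `s` of `A - C`, taken with the sign `ε_s` of `(A - C) s`, extends `C` to a subchain
`C + ε_s δ_s` of `A`. If none of these extensions had boundary cancellation, that is if
`∂C` and `∂(ε_s δ_s)` had the same sign at every point for every `s`, then `∂C` would
also have the same sign as `∂(A - C) = ∑ |(A - C) s| ∂(ε_s δ_s)` everywhere, so `∂C`
would be a subchain of `∂A` and `C` a proper nontrivial component of the connected
chain `A`.
-/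

theorem Int.natAbs_add_eq_add_natAbs_iff (a b : ℤ) :
    (a + b).natAbs = a.natAbs + b.natAbs ↔ 0 ≤ a * b := by
  rw [mul_nonneg_iff, ← abs_add_eq_add_abs_iff]
  zify

theorem exists_seq_of_forall_step {α : Type*} (P : ℕ → α → Prop) (R : α → α → Prop)
    {N : ℕ} {x₀ : α} (h₀ : P 0 x₀)
    (step : ∀ k x, k + 1 < N → P k x → ∃ y, P (k + 1) y ∧ R x y) :
    ∃ x : ℕ → α, x 0 = x₀ ∧ (∀ k < N, P k (x k)) ∧
      ∀ k, k + 1 < N → R (x k) (x (k + 1)) := by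
  have step' : ∀ k x, ∃ y, k + 1 < N → P k x → P (k + 1) y ∧ R x y := by
    intro k x
    by_cases h : k + 1 < N ∧ P k x
    · obtain ⟨y, hy⟩ := step k x h.1 h.2
      exact ⟨y, fun _ _ => hy⟩
    · exact ⟨x, fun h₁ h₂ => absurd ⟨h₁, h₂⟩ h⟩
  choose f hf using step'
  let x : ℕ → α := fun k => Nat.rec x₀ f k
  have hP : ∀ k < N, P k (x k) := by
    intro k
    induction k with
    | zero => exact fun _ => h₀
    | succ k ih => exact fun hk => (hf k (x k) hk (ih (by omega))).1
  exact ⟨x, rfl, hP, fun k hk => (hf k (x k) hk (hP k (by omega))).2⟩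

section Volume

variable {S : Type*}

theorem vol_eq_sum_of_support_subset (A : S →₀ ℤ) {F : Finset S} (h : A.support ⊆ F) :
    vol A = ∑ s ∈ F, (A s).natAbs :=
  Finset.sum_subset h fun s _ hs => by simp [Finsupp.notMem_support_iff.mp hs]

theorem vol_eq_zero_iff {A : S →₀ ℤ} : vol A = 0 ↔ A = 0 := by
  simp [vol, Finset.sum_eq_zero_iff, Finsupp.ext_iff]

theorem vol_single_sign (s : S) {a : ℤ} (ha : a ≠ 0) : vol (Finsupp.single s a.sign) = 1 := by
  simp [vol, Finsupp.support_single, ha, Int.natAbs_sign_of_ne_zero ha]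

theorem vol_add_le (u v : S →₀ ℤ) : vol (u + v) ≤ vol u + vol v := by
  classical
  rw [vol_eq_sum_of_support_subset (u + v) Finsupp.support_add,
    vol_eq_sum_of_support_subset u Finset.subset_union_left,
    vol_eq_sum_of_support_subset v Finset.subset_union_right, ← Finset.sum_add_distrib]
  exact Finset.sum_le_sum fun s _ => Int.natAbs_add_le _ _

theorem vol_add_eq_iff (u v : S →₀ ℤ) :
    vol (u + v) = vol u + vol v ↔ ∀ s, 0 ≤ u s * v s := by
  classical
  rw [vol_eq_sum_of_support_subset (u + v) Finsupp.support_add,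
    vol_eq_sum_of_support_subset u Finset.subset_union_left,
    vol_eq_sum_of_support_subset v Finset.subset_union_right, ← Finset.sum_add_distrib]
  simp only [Finsupp.add_apply]
  rw [Finset.sum_eq_sum_iff_of_le fun s _ => Int.natAbs_add_le _ _]
  simp only [Int.natAbs_add_eq_add_natAbs_iff]
  refine ⟨fun h s => ?_, fun h s _ => h s⟩
  by_cases hs : s ∈ u.support ∪ v.support
  · exact h s hs
  · simp_all

theorem vol_add_sum_nsmul {ι : Type*} (u : S →₀ ℤ) (v : ι → S →₀ ℤ) (c : ι → ℕ)
    (I : Finset ι) (h : ∀ i ∈ I, vol (u + v i) = vol u + vol (v i)) :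
    vol (u + ∑ i ∈ I, c i • v i) = vol u + vol (∑ i ∈ I, c i • v i) := by
  simp only [vol_add_eq_iff] at h ⊢
  intro s
  rw [Finsupp.finsetSum_apply, Finset.mul_sum]
  refine Finset.sum_nonneg fun i hi => ?_
  rw [Finsupp.smul_apply, mul_smul_comm]
  exact nsmul_nonneg (h i hi s) _

theorem sum_natAbs_smul_single_sign (R : S →₀ ℤ) :
    ∑ s ∈ R.support, (R s).natAbs • Finsupp.single s (R s).sign = R := by
  conv_rhs => rw [← Finsupp.sum_single R]
  refine Finset.sum_congr rfl fun s _ => ?_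
  rw [Finsupp.smul_single, nsmul_eq_mul, Int.natCast_natAbs, mul_comm, Int.sign_mul_abs]

end Volume

section Subchain

variable {S : Type*} {A B C E : S →₀ ℤ}

theorem subchain_self_add_iff : Subchain B (B + E) ↔ vol (B + E) = vol B + vol E := by
  rw [Subchain, add_sub_cancel_left]

theorem subchain_iff_forall_mul_nonneg : Subchain B A ↔ ∀ s, 0 ≤ B s * (A s - B s) := by
  conv_lhs => rw [← add_sub_cancel B A]
  rw [subchain_self_add_iff, vol_add_eq_iff]
  simp only [Finsupp.sub_apply]

theorem Subchain.eq_of_vol_eq (h : Subchain B A) (hv : vol B = vol A) : B = A := by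
  rw [Subchain, hv, left_eq_add, vol_eq_zero_iff, sub_eq_zero] at h
  exact h.symm

theorem subchain_single_sign {s : S} (hs : s ∈ A.support) :
    Subchain (Finsupp.single s (A s).sign) A := by
  rw [subchain_iff_forall_mul_nonneg]
  intro t
  rcases eq_or_ne t s with rfl | hts
  · rw [Finsupp.single_eq_same]
    rcases lt_or_gt_of_ne (Finsupp.mem_support_iff.mp hs) with hneg | hpos
    · rw [Int.sign_eq_neg_one_of_neg hneg]; omega
    · rw [Int.sign_eq_one_of_pos hpos]; omega
  · simp [Finsupp.single_eq_of_ne hts]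

theorem Subchain.add_of_sub (hC : Subchain C A) (hE : Subchain E (A - C)) :
    Subchain C (C + E) ∧ Subchain (C + E) A := by
  have hsum : vol A ≤ vol (C + E) + vol (A - (C + E)) := by
    simpa using vol_add_le (C + E) (A - (C + E))
  have hCE := vol_add_le C E
  unfold Subchain at hC hE ⊢
  rw [sub_sub] at hE
  rw [add_sub_cancel_left]
  omega

end Subchain

section Connected

variable {S T : Type*} {d : (S →₀ ℤ) →ₗ[ℤ] (T →₀ ℤ)} {A C : S →₀ ℤ}

theorem Connected.exists_cancelling_cell (hA : Connected d A) (hC : Subchain C A)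
    (hC0 : C ≠ 0) (hCA : C ≠ A) :
    ∃ s ∈ (A - C).support, vol (d (C + Finsupp.single s ((A - C) s).sign)) <
      vol (d C) + vol (d (Finsupp.single s ((A - C) s).sign)) := by
  by_contra! h
  have hdC : Subchain (d C) (d A) := by
    rw [← add_sub_cancel C A, map_add, subchain_self_add_iff,
      ← sum_natAbs_smul_single_sign (A - C), map_sum]
    simp only [map_nsmul]
    refine vol_add_sum_nsmul _ _ _ _ fun s hs => le_antisymm ?_ ?_
    · exact vol_add_le _ _
    · simpa only [map_add] using h s hs
  rcases hA C ⟨hC, hdC⟩ with h0 | hA'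
  exacts [hC0 h0, hCA hA']

theorem Connected.exists_subchain_extension (hA : Connected d A) (hC : Subchain C A)
    (hC0 : C ≠ 0) (hCA : C ≠ A) :
    ∃ D, Subchain C D ∧ Subchain D A ∧ vol D = vol C + 1 ∧
      vol (d D) < vol (d C) + vol (d (D - C)) := by
  obtain ⟨s, hs, hlt⟩ := hA.exists_cancelling_cell hC hC0 hCA
  obtain ⟨hCD, hDA⟩ := hC.add_of_sub (subchain_single_sign hs)
  refine ⟨_, hCD, hDA, ?_, by rwa [add_sub_cancel_left]⟩
  rw [subchain_self_add_iff.mp hCD, vol_single_sign s (Finsupp.mem_support_iff.mp hs)]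

end Connected

/-- A connected chain `A` of volume `n ≥ 1` can be built up cell by cell from any
point `s₀` of its support: there are subchains `B₁ ⊆ B₂ ⊆ ⋯ ⊆ Bₙ = A` with
`‖Bₖ‖ = k`, `B₁ = ±δ_{s₀}`, and each added cell sharing boundary with the previous
stage. -/
theorem exists_connected_buildup {S T : Type*} (d : (S →₀ ℤ) →ₗ[ℤ] (T →₀ ℤ))
    (A : S →₀ ℤ) (n : ℕ) (hn : 1 ≤ n) (hvol : vol A = n)
    (hconn : Connected d A) (s₀ : S) (hs₀ : s₀ ∈ A.support) :
    ∃ B : Fin n → (S →₀ ℤ),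
      B ⟨n - 1, by omega⟩ = A ∧
      (∀ k : Fin n, vol (B k) = (k : ℕ) + 1) ∧
      (B ⟨0, by omega⟩ = Finsupp.single s₀ 1 ∨
        B ⟨0, by omega⟩ = Finsupp.single s₀ (-1)) ∧
      (∀ k : Fin n, Subchain (B k) A) ∧
      (∀ (k : ℕ) (h : k + 1 < n),
        Subchain (B ⟨k, by omega⟩) (B ⟨k + 1, h⟩) ∧
        vol (d (B ⟨k + 1, h⟩)) <
          vol (d (B ⟨k, by omega⟩)) +
            vol (d (B ⟨k + 1, h⟩ - B ⟨k, by omega⟩))) := by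
  have hA₀ : A s₀ ≠ 0 := Finsupp.mem_support_iff.mp hs₀
  obtain ⟨B, hB₀, hB, hstep⟩ := exists_seq_of_forall_step (N := n)
    (fun k C => Subchain C A ∧ vol C = k + 1)
    (fun C D => Subchain C D ∧ vol (d D) < vol (d C) + vol (d (D - C)))
    ⟨subchain_single_sign hs₀, vol_single_sign s₀ hA₀⟩
    (fun k C hk ⟨hCA, hvC⟩ => by
      obtain ⟨D, hCD, hDA, hvD, hlt⟩ := hconn.exists_subchain_extension hCA
        (by rintro rfl; simp [vol] at hvC) (by rintro rfl; omega)
      exact ⟨D, ⟨hDA, by omega⟩, hCD, hlt⟩)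
  refine ⟨fun k => B k, ?_, fun k => (hB k k.2).2, ?_, fun k => (hB k k.2).1,
    fun k hk => hstep k hk⟩
  · exact (hB (n - 1) (by omega)).1.eq_of_vol_eq (by rw [(hB (n - 1) (by omega)).2]; omega)
  · simp only [hB₀]
    rcases lt_or_gt_of_ne hA₀ with hneg | hpos
    · exact Or.inr (by rw [Int.sign_eq_neg_one_of_neg hneg])
    · exact Or.inl (by rw [Int.sign_eq_one_of_pos hpos])
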